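/- For every real number x and every nonnegative integer m, ∏_{k=0}^{2m-1} sin(2^k·x) = (-1)^m · 2^{-2m} · Σ_{j=0}^{2^{2m} - 1} (-1)^{s(j)} · cos((2j+1)·x - 2^{2m}·x). -/
import Mathlib


/-- `s j` is the sum of the binary digits of `j`. -/
def s (j : ℕ) : ℕ := (Nat.digits 2 j).sum

lemma s_two_mul (a : ℕ) : s (2 * a) = s a := by
  rcases Nat.eq_zero_or_pos a with h | h
  · simp [h]
  · unfold s
    rw [Nat.digits_def' (by norm_num : 1 < 2) (by omega)]
    have h1 : 2 * a % 2 = 0 := by omega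
    have h2 : 2 * a / 2 = a := by omega
    rw [h1, h2]
    simp

lemma s_two_mul_add_one (a : ℕ) : s (2 * a + 1) = s a + 1 := by
  unfold s
  rw [Nat.digits_def' (by norm_num : 1 < 2) (by omega)]
  have h1 : (2 * a + 1) % 2 = 1 := by omega
  have h2 : (2 * a + 1) / 2 = a := by omega
  rw [h1, h2]
  simp [Nat.add_comm]

lemma s_add_pow : ∀ n, ∀ j, j < 2 ^ n → s (j + 2 ^ n) = s j + 1 := by
  intro n
  induction n with
  | zero =>
    intro j hj
    interval_cases j
    simp [s]
  | succ n ih =>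
    intro j hj
    rcases Nat.even_or_odd j with ⟨q, hq⟩ | ⟨q, hq⟩
    · have hq' : q < 2 ^ n := by rw [pow_succ] at hj; omega
      have h1 : j + 2 ^ (n + 1) = 2 * (q + 2 ^ n) := by rw [pow_succ]; omega
      have h2 : j = 2 * q := by omega
      rw [h1, s_two_mul, ih q hq', h2, s_two_mul]
    · have hq' : q < 2 ^ n := by rw [pow_succ] at hj; omega
      have h1 : j + 2 ^ (n + 1) = 2 * (q + 2 ^ n) + 1 := by rw [pow_succ] at *; omega
      rw [h1, s_two_mul_add_one, ih q hq', hq, s_two_mul_add_one]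

noncomputable def Sn (x : ℝ) (n : ℕ) : ℝ :=
  ∑ j ∈ Finset.range (2 ^ n),
    (-1 : ℝ) ^ s j * Real.cos ((2 * (j : ℝ) + 1) * x - 2 ^ n * x)

noncomputable def Tn (x : ℝ) (n : ℕ) : ℝ :=
  ∑ j ∈ Finset.range (2 ^ n),
    (-1 : ℝ) ^ s j * Real.sin ((2 * (j : ℝ) + 1) * x - 2 ^ n * x)

lemma Sn_succ (x : ℝ) (n : ℕ) : Sn x (n + 1) = 2 * Real.sin (2 ^ n * x) * Tn x n := by
  unfold Sn Tn
  have h2 : 2 ^ (n + 1) = 2 ^ n + 2 ^ n := by rw [pow_succ]; ring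
  rw [h2, Finset.sum_range_add, Finset.mul_sum, ← Finset.sum_add_distrib]
  apply Finset.sum_congr rfl
  intro j hj
  simp only [Finset.mem_range] at hj
  have hs : s (2 ^ n + j) = s j + 1 := by rw [Nat.add_comm]; exact s_add_pow n j hj
  rw [hs]
  push_cast [pow_succ]
  rw [show (2 * (j : ℝ) + 1) * x - 2 ^ n * 2 * x
      = ((2 * (j : ℝ) + 1) * x - 2 ^ n * x) - 2 ^ n * x by ring,
    show (2 * ((2:ℝ) ^ n + (j : ℝ)) + 1) * x - 2 ^ n * 2 * x
      = ((2 * (j : ℝ) + 1) * x - 2 ^ n * x) + 2 ^ n * x by ring,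
    Real.cos_sub, Real.cos_add]
  ring

lemma Tn_succ (x : ℝ) (n : ℕ) : Tn x (n + 1) = -2 * Real.sin (2 ^ n * x) * Sn x n := by
  unfold Sn Tn
  have h2 : 2 ^ (n + 1) = 2 ^ n + 2 ^ n := by rw [pow_succ]; ring
  rw [h2, Finset.sum_range_add, Finset.mul_sum, ← Finset.sum_add_distrib]
  apply Finset.sum_congr rfl
  intro j hj
  simp only [Finset.mem_range] at hj
  have hs : s (2 ^ n + j) = s j + 1 := by rw [Nat.add_comm]; exact s_add_pow n j hj
  rw [hs]
  push_cast [pow_succ]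
  rw [show (2 * (j : ℝ) + 1) * x - 2 ^ n * 2 * x
      = ((2 * (j : ℝ) + 1) * x - 2 ^ n * x) - 2 ^ n * x by ring,
    show (2 * ((2:ℝ) ^ n + (j : ℝ)) + 1) * x - 2 ^ n * 2 * x
      = ((2 * (j : ℝ) + 1) * x - 2 ^ n * x) + 2 ^ n * x by ring,
    Real.sin_sub, Real.sin_add]
  ring

theorem stmt_11 (x : ℝ) (m : ℕ) :
    ∏ k ∈ Finset.range (2 * m), Real.sin (2 ^ k * x) =
      (-1 : ℝ) ^ m * (2 : ℝ) ^ (-(2 * m : ℤ)) *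
        ∑ j ∈ Finset.range (2 ^ (2 * m)),
          (-1 : ℝ) ^ s j * Real.cos ((2 * (j : ℝ) + 1) * x - 2 ^ (2 * m) * x) := by
  have key : ∀ m : ℕ, ∏ k ∈ Finset.range (2 * m), Real.sin (2 ^ k * x) =
      (-1 : ℝ) ^ m * ((4 : ℝ) ^ m)⁻¹ * Sn x (2 * m) := by
    intro m
    induction m with
    | zero => simp [Sn, s]
    | succ m ih =>
      have h1 : 2 * (m + 1) = (2 * m + 1) + 1 := by ring
      rw [h1, Finset.prod_range_succ, Finset.prod_range_succ, ih,
        Sn_succ, Tn_succ]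
      field_simp
      ring
  have hc : (2 : ℝ) ^ (-(2 * m : ℤ)) = ((4 : ℝ) ^ m)⁻¹ := by
    rw [zpow_neg]
    norm_num [← zpow_natCast, ← zpow_natCast (2:ℝ), pow_mul]
    rw [zpow_mul]
    norm_num
  rw [key m, hc]
  rfl
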